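/- Fix the PVBS model in dimension d = 2 with n ≥ 1 species. If 0 < δ < (1 − 3/(16n))/(96 n² (16n+1)²) and the anisotropy parameters satisfy (1/2)δ^i ≤ λ_i^{(k)} ≤ 2δ^i for all 1 ≤ i ≤ n and k ∈ {1,2}, then the PVBS Hamiltonian H_L is gapped, i.e., inf_{L ≥ 2} γ_L > 0. -/

import Mathlib

open scoped BigOperators ComplexOrder Matrix

namespace PVBS

/-- The standard basis vector `|a ⊗ b⟩` of `ℂ^{n+1} ⊗ ℂ^{n+1}`
(realized as functions on `Fin (n+1) × Fin (n+1)`). -/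
def ketPair {n : ℕ} (a b : Fin (n + 1)) : Fin (n + 1) × Fin (n + 1) → ℂ :=
  fun p => if p = (a, b) then 1 else 0

/-- The orthogonal projection onto the span of the vector `v` (interpreted as `0` if `v = 0`). -/
noncomputable def projOnto {P : Type*} [Fintype P] (v : P → ℂ) : Matrix P P ℂ :=
  ((∑ p, Complex.normSq (v p) : ℝ) : ℂ)⁻¹ • Matrix.of fun a b => v a * (starRingEnd ℂ) (v b)

/-- The vector `φ_i = |0 ⊗ i⟩ − λ_i |i ⊗ 0⟩` (the species `1 ≤ i ≤ n` is encoded as `i : Fin n`,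
with corresponding basis element `i.succ : Fin (n+1)`). -/
def phiA {n : ℕ} (lam : ℝ) (i : Fin n) : Fin (n + 1) × Fin (n + 1) → ℂ :=
  fun p => ketPair 0 i.succ p - (lam : ℂ) * ketPair i.succ 0 p

/-- The vector `φ_{ij} = λ_i |i ⊗ j⟩ − λ_j |j ⊗ i⟩` for `i < j`. -/
def phiB {n : ℕ} (lami lamj : ℝ) (i j : Fin n) : Fin (n + 1) × Fin (n + 1) → ℂ :=
  fun p => (lami : ℂ) * ketPair i.succ j.succ p - (lamj : ℂ) * ketPair j.succ i.succ p

/-- The vector `φ_{ii} = |i ⊗ i⟩`. -/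
def phiC {n : ℕ} (i : Fin n) : Fin (n + 1) × Fin (n + 1) → ℂ := ketPair i.succ i.succ

/-- The local PVBS interaction `h^{(k)}` in a fixed direction `k`, built from the anisotropy
parameters `lam i = λ_{i+1}^{(k)}`: the sum of the orthogonal projections onto the normalized
versions of the vectors `φ_i` (for `1 ≤ i ≤ n`) and `φ_{ij}` (for `1 ≤ i ≤ j ≤ n`). -/
noncomputable def hloc {n : ℕ} (lam : Fin n → ℝ) :
    Matrix (Fin (n + 1) × Fin (n + 1)) (Fin (n + 1) × Fin (n + 1)) ℂ :=
  (∑ i, projOnto (phiA (lam i) i)) +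
    ∑ i, ∑ j,
      if i < j then projOnto (phiB (lam i) (lam j) i j)
      else if i = j then projOnto (phiC i) else 0

/-- The reference interaction `h̃ = Σ_{i=1}^n |0⊗i⟩⟨0⊗i| + Σ_{1≤i≤j≤n} |i⊗j⟩⟨i⊗j|`
(the `δ = 0` model). -/
noncomputable def htilde (n : ℕ) :
    Matrix (Fin (n + 1) × Fin (n + 1)) (Fin (n + 1) × Fin (n + 1)) ℂ :=
  (∑ i : Fin n, projOnto (ketPair 0 i.succ)) +
    ∑ i : Fin n, ∑ j : Fin n, if i ≤ j then projOnto (ketPair i.succ j.succ) else 0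

/-- The embedding of a two-site operator `h2` at the ordered pair of sites `(x, y)` of `V`,
acting as the identity on all other sites. -/
def embed {n : ℕ} {V : Type*} [Fintype V] [DecidableEq V] (x y : V)
    (h2 : Matrix (Fin (n + 1) × Fin (n + 1)) (Fin (n + 1) × Fin (n + 1)) ℂ) :
    Matrix (V → Fin (n + 1)) (V → Fin (n + 1)) ℂ :=
  Matrix.of fun σ τ =>
    if ∀ z, z ≠ x → z ≠ y → σ z = τ z then h2 (σ x, σ y) (τ x, τ y) else 0

/-- The spectral gap of a matrix: the smallest positive (real) element of its spectrum
(by convention `sInf ∅ = 0` if there is none). -/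
noncomputable def gap {I : Type*} [Fintype I] [DecidableEq I] (M : Matrix I I ℂ) : ℝ :=
  sInf {γ : ℝ | 0 < γ ∧ (γ : ℂ) ∈ spectrum ℂ M}

/-! ### The periodic box `Λ_L = (ZMod N)^d`, `N = 2L`. -/

/-- The neighbor `x + e_k` of the site `x` on the torus `(ZMod N)^d`. -/
def nbrT {d N : ℕ} (x : Fin d → ZMod N) (k : Fin d) : Fin d → ZMod N :=
  fun j => if j = k then x j + 1 else x j

/-- The interaction term `h_e = h^{(k)}_{x, x+e_k}` attached to the oriented edge
`e = (x, k)` of the torus. -/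
noncomputable def hedge {n d N : ℕ} [NeZero N] (lam : Fin n → Fin d → ℝ)
    (e : (Fin d → ZMod N) × Fin d) :
    Matrix ((Fin d → ZMod N) → Fin (n + 1)) ((Fin d → ZMod N) → Fin (n + 1)) ℂ :=
  embed e.1 (nbrT e.1 e.2) (hloc fun i => lam i e.2)

/-- The PVBS Hamiltonian `H_L = Σ_{x ∈ Λ_L} Σ_{k=1}^d h^{(k)}_{x,x+e_k}` on the periodic
box `Λ_L = (ZMod N)^d` with `N = 2L`. -/
noncomputable def HL (n d N : ℕ) [NeZero N] (lam : Fin n → Fin d → ℝ) :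
    Matrix ((Fin d → ZMod N) → Fin (n + 1)) ((Fin d → ZMod N) → Fin (n + 1)) ℂ :=
  ∑ e : (Fin d → ZMod N) × Fin d, hedge lam e

/-- The (unordered) endpoints of the oriented torus edge `e = (x, k)`. -/
def epT {d N : ℕ} (e : (Fin d → ZMod N) × Fin d) : Finset (Fin d → ZMod N) :=
  {e.1, nbrT e.1 e.2}

/-- `Q = Σ_{e ∼ e'} {h_e, h_{e'}}`: the sum over (unordered) pairs of torus edges sharing
exactly one vertex of the anticommutator `{h_e, h_{e'}}`, written as a sum of the products
`h_e * h_{e'}` over ordered pairs. -/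
noncomputable def QL (n d N : ℕ) [NeZero N] (lam : Fin n → Fin d → ℝ) :
    Matrix ((Fin d → ZMod N) → Fin (n + 1)) ((Fin d → ZMod N) → Fin (n + 1)) ℂ :=
  ∑ e : (Fin d → ZMod N) × Fin d, ∑ e' : (Fin d → ZMod N) × Fin d,
    if (epT e ∩ epT e').card = 1 then hedge lam e * hedge lam e' else 0

/-- `R = Σ_{e ≁ e'} {h_e, h_{e'}}`: the sum over (unordered) pairs of torus edges sharing
no vertex of the anticommutator `{h_e, h_{e'}}`, written as a sum of the products
`h_e * h_{e'}` over ordered pairs. -/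
noncomputable def RL (n d N : ℕ) [NeZero N] (lam : Fin n → Fin d → ℝ) :
    Matrix ((Fin d → ZMod N) → Fin (n + 1)) ((Fin d → ZMod N) → Fin (n + 1)) ℂ :=
  ∑ e : (Fin d → ZMod N) × Fin d, ∑ e' : (Fin d → ZMod N) × Fin d,
    if (epT e ∩ epT e').card = 0 then hedge lam e * hedge lam e' else 0

/-! ### Subgraphs of `ℤ^d` and the box on a stick `C_m`. -/

/-- The neighbor `x + e_k` of the site `x ∈ ℤ^d`. -/
def nbrZ {d : ℕ} (x : Fin d → ℤ) (k : Fin d) : Fin d → ℤ :=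
  fun j => if j = k then x j + 1 else x j

/-- The point `l·e_1 ∈ ℤ^d`. -/
def stickPt (d : ℕ) (l : ℕ) : Fin d → ℤ := fun k => if (k : ℕ) = 0 then (l : ℤ) else 0

/-- The stick `S = {0, e_1, …, (n−1)e_1} ⊂ ℤ^d`. -/
def stickF (d n : ℕ) : Finset (Fin d → ℤ) := (Finset.range n).image (stickPt d)

/-- The box `B_m = {Σ a_k e_k : n ≤ a_1 ≤ m+n, 0 ≤ a_k ≤ m for k ≥ 2} ⊂ ℤ^d`. -/
def boxF (d n m : ℕ) : Finset (Fin d → ℤ) :=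
  Finset.image
    (fun a : Fin d → Fin (m + 1) => fun k : Fin d =>
      if (k : ℕ) = 0 then (n : ℤ) + (a k : ℤ) else (a k : ℤ))
    Finset.univ

/-- The box on a stick `C_m = S ∪ B_m ⊂ ℤ^d`. -/
def CmF (d n m : ℕ) : Finset (Fin d → ℤ) := stickF d n ∪ boxF d n m

/-- The PVBS subsystem Hamiltonian `H_G = Σ_{e ∈ E_G} h_e` of a finite subgraph
`G ⊂ ℤ^d` (with one interaction term for every oriented lattice edge with both endpoints
in `G`), acting on `⊗_{x ∈ G} ℂ^{n+1}`. -/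
noncomputable def HG {d : ℕ} (n : ℕ) (lam : Fin n → Fin d → ℝ) (G : Finset (Fin d → ℤ)) :
    Matrix ({x // x ∈ G} → Fin (n + 1)) ({x // x ∈ G} → Fin (n + 1)) ℂ :=
  ∑ x : {x // x ∈ G}, ∑ k : Fin d,
    if h : nbrZ (x : Fin d → ℤ) k ∈ G then
      embed x ⟨nbrZ (x : Fin d → ℤ) k, h⟩ (hloc fun i => lam i k)
    else 0

/-- The PVBS Hamiltonian `H_{C_m}` of the box on a stick. -/
noncomputable def HCm (d n m : ℕ) (lam : Fin n → Fin d → ℝ) :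
    Matrix ({x // x ∈ CmF d n m} → Fin (n + 1)) ({x // x ∈ CmF d n m} → Fin (n + 1)) ℂ :=
  HG n lam (CmF d n m)

/-- The reference (`δ = 0`) Hamiltonian `H̃_G = Σ_{e ∈ E_G} h̃_e` of a finite subgraph
`G ⊂ ℤ^d`. -/
noncomputable def HtildeG {d : ℕ} (n : ℕ) (G : Finset (Fin d → ℤ)) :
    Matrix ({x // x ∈ G} → Fin (n + 1)) ({x // x ∈ G} → Fin (n + 1)) ℂ :=
  ∑ x : {x // x ∈ G}, ∑ k : Fin d,
    if h : nbrZ (x : Fin d → ℤ) k ∈ G then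
      embed x ⟨nbrZ (x : Fin d → ℤ) k, h⟩ (htilde n)
    else 0

/-! ### Translates `x + C_m` inside the torus. -/

/-- The interaction term of the lattice edge `(c, c + e_k)` of `ℤ^d`, translated by
`x` into the torus `(ZMod N)^d` (reducing coordinates mod `N`). -/
noncomputable def hedgeTrans {n d N : ℕ} [NeZero N] (lam : Fin n → Fin d → ℝ)
    (x : Fin d → ZMod N) (c : Fin d → ℤ) (k : Fin d) :
    Matrix ((Fin d → ZMod N) → Fin (n + 1)) ((Fin d → ZMod N) → Fin (n + 1)) ℂ :=
  embed (fun j => x j + (c j : ZMod N)) (fun j => x j + ((nbrZ c k) j : ZMod N))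
    (hloc fun i => lam i k)

/-- The subsystem Hamiltonian `H_{x+C_m}` of the translate `x + C_m ⊂ Λ_L`, acting on the
full torus Hilbert space. -/
noncomputable def HtransCm (n d N m : ℕ) [NeZero N] (lam : Fin n → Fin d → ℝ)
    (x : Fin d → ZMod N) :
    Matrix ((Fin d → ZMod N) → Fin (n + 1)) ((Fin d → ZMod N) → Fin (n + 1)) ℂ :=
  ∑ c : {y // y ∈ CmF d n m}, ∑ k : Fin d,
    if nbrZ (c : Fin d → ℤ) k ∈ CmF d n m then hedgeTrans lam x (c : Fin d → ℤ) k else 0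

/-- The (unordered) endpoints of the oriented lattice edge `(c, c + e_k)` of `ℤ^d`. -/
def epZ {d : ℕ} (c : Fin d → ℤ) (k : Fin d) : Finset (Fin d → ℤ) := {c, nbrZ c k}

/-- `Q_{x+C_m}`: the sum of the anticommutators `{h_e, h_{e'}}` over (unordered) pairs of
edges of `x + C_m` sharing exactly one vertex, written as a sum of products over ordered
pairs. -/
noncomputable def QtransCm (n d N m : ℕ) [NeZero N] (lam : Fin n → Fin d → ℝ)
    (x : Fin d → ZMod N) :
    Matrix ((Fin d → ZMod N) → Fin (n + 1)) ((Fin d → ZMod N) → Fin (n + 1)) ℂ :=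
  ∑ c : {y // y ∈ CmF d n m}, ∑ k : Fin d,
    ∑ c' : {y // y ∈ CmF d n m}, ∑ k' : Fin d,
      if nbrZ (c : Fin d → ℤ) k ∈ CmF d n m ∧ nbrZ (c' : Fin d → ℤ) k' ∈ CmF d n m ∧
          (epZ (c : Fin d → ℤ) k ∩ epZ (c' : Fin d → ℤ) k').card = 1 then
        hedgeTrans lam x (c : Fin d → ℤ) k * hedgeTrans lam x (c' : Fin d → ℤ) k'
      else 0

/-- `R_{x+C_m}`: the sum of the anticommutators `{h_e, h_{e'}}` over (unordered) pairs of
vertex-disjoint edges of `x + C_m`, written as a sum of products over ordered pairs. -/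
noncomputable def RtransCm (n d N m : ℕ) [NeZero N] (lam : Fin n → Fin d → ℝ)
    (x : Fin d → ZMod N) :
    Matrix ((Fin d → ZMod N) → Fin (n + 1)) ((Fin d → ZMod N) → Fin (n + 1)) ℂ :=
  ∑ c : {y // y ∈ CmF d n m}, ∑ k : Fin d,
    ∑ c' : {y // y ∈ CmF d n m}, ∑ k' : Fin d,
      if nbrZ (c : Fin d → ℤ) k ∈ CmF d n m ∧ nbrZ (c' : Fin d → ℤ) k' ∈ CmF d n m ∧
          (epZ (c : Fin d → ℤ) k ∩ epZ (c' : Fin d → ℤ) k').card = 0 then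
        hedgeTrans lam x (c : Fin d → ℤ) k * hedgeTrans lam x (c' : Fin d → ℤ) k'
      else 0

/-- The particle number operator `N_i` of species `1 ≤ i ≤ n` on `⊗_{x ∈ G} ℂ^{n+1}`:
diagonal in the product basis, counting the sites carrying the label `i`. -/
noncomputable def Nop {d : ℕ} {n : ℕ} (G : Finset (Fin d → ℤ)) (i : Fin n) :
    Matrix ({x // x ∈ G} → Fin (n + 1)) ({x // x ∈ G} → Fin (n + 1)) ℂ :=
  Matrix.diagonal fun σ => ((Finset.univ.filter fun x => σ x = i.succ).card : ℂ)

/-- The product basis vector of `⊗_{x} ℂ^{n+1}` labelled by the configuration `σ`. -/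
def bvec {I : Type*} [DecidableEq I] (σ : I) : I → ℂ := fun τ => if τ = σ then 1 else 0

/-!
Extending the anisotropy parameters by `λ_0 = 1`, each local term `h^{(k)}` is the sum of the
projections onto `λ_a |a ⊗ b⟩ − λ_b |b ⊗ a⟩` (`a < b`) and onto `|a ⊗ a⟩` (`a ≠ 0`), and the
hypotheses give `λ_b ≤ 4δ λ_a` whenever `a < b`. In the product basis the diagonal entry of `h` at
an ascending pair (`a ≤ b ≠ 0`) is therefore at least `1 − 16δ²`, and the only other entry in its
row, at the swapped pair, has modulus at most `4δ`.

By Gershgorin's theorem every eigenvalue `γ` of `H_L` lies within the off-diagonal row sum of some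
diagonal entry `H_σσ`. The row of the empty configuration vanishes, which forces `γ = 0`. Otherwise
the row sum is at most `4δ` per edge with distinct end states, hence at most `16δ` times the number
of occupied sites, while telescoping `σ` along `e_1` shows that there are at least `1/(n+1)` times
as many ascending horizontal pairs as occupied sites. So every positive eigenvalue is at least
`(1 − 16δ²)/(n+1) − 16δ ≥ 1/(2(n+1))` for every `L`; a positive eigenvalue exists because the trace
of `H_L` is positive.
-/

open Finset

section Elementary

lemma one_sub_sq_le_sq_div_sq_add_sq {x y ε : ℝ} (hx : 0 < x) (hy : 0 ≤ y) (hyx : y ≤ ε * x) :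
    1 - ε ^ 2 ≤ x ^ 2 / (x ^ 2 + y ^ 2) := by
  rw [le_div_iff₀ (by positivity)]
  nlinarith [mul_le_mul hyx hyx hy (hy.trans hyx), sq_nonneg (ε * y)]

lemma mul_div_sq_add_sq_le {x y ε : ℝ} (hx : 0 < x) (hy : 0 ≤ y) (hyx : y ≤ ε * x) :
    x * y / (x ^ 2 + y ^ 2) ≤ ε := by
  have hε : 0 ≤ ε := nonneg_of_mul_nonneg_left (hy.trans hyx) hx
  rw [div_le_iff₀ (by positivity)]
  nlinarith [mul_le_mul_of_nonneg_left hyx hx.le, mul_nonneg hε (sq_nonneg y)]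

lemma one_sub_sq_div_sub_le {γ ε m D P G : ℝ} (hγ : 0 < γ) (hε : 0 ≤ ε) (hm : 0 < m)
    (hD : 0 ≤ D) (hP : 1 ≤ P) (hPG : P ≤ m * G) (h : (1 - ε ^ 2) * G - D * ε * P ≤ γ) :
    (1 - ε ^ 2) / m - D * ε ≤ γ := by
  rcases le_or_gt ((1 - ε ^ 2) / m - D * ε) 0 with hc | hc
  · linarith
  have h₁ : 0 ≤ 1 - ε ^ 2 := by
    have : 0 < (1 - ε ^ 2) / m := by nlinarith [mul_nonneg hD hε]
    exact ((div_pos_iff_of_pos_right hm).mp this).le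
  have hG : (1 - ε ^ 2) * P / m ≤ (1 - ε ^ 2) * G := by
    rw [div_le_iff₀ hm]
    nlinarith [mul_le_mul_of_nonneg_left hPG h₁]
  calc (1 - ε ^ 2) / m - D * ε
      ≤ ((1 - ε ^ 2) / m - D * ε) * P := le_mul_of_one_le_right hc.le hP
    _ ≤ (1 - ε ^ 2) * G - D * ε * P := by
        rw [sub_mul, div_mul_eq_mul_div]
        linarith
    _ ≤ γ := h

end Elementary

section Projection

variable {P : Type*} [Fintype P]

lemma projOnto_apply (v : P → ℂ) (p q : P) :
    projOnto v p q = ((∑ r, Complex.normSq (v r) : ℝ) : ℂ)⁻¹ * (v p * starRingEnd ℂ (v q)) :=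
  rfl

lemma projOnto_zero : projOnto (0 : P → ℂ) = 0 := by
  ext p q
  simp [projOnto_apply]

lemma projOnto_isHermitian (v : P → ℂ) : (projOnto v).IsHermitian := by
  ext p q
  simp [projOnto_apply, mul_comm]

lemma projOnto_apply_eq_zero_of_left {v : P → ℂ} {p : P} (h : v p = 0) (q : P) :
    projOnto v p q = 0 := by
  simp [projOnto_apply, h]

lemma projOnto_apply_eq_zero_of_right {v : P → ℂ} {q : P} (h : v q = 0) (p : P) :
    projOnto v p q = 0 := by
  simp [projOnto_apply, h]

lemma re_projOnto_apply_self (v : P → ℂ) (p : P) :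
    (projOnto v p p).re = Complex.normSq (v p) / ∑ r, Complex.normSq (v r) := by
  rw [projOnto_apply, Complex.mul_conj, ← Complex.ofReal_inv, ← Complex.ofReal_mul,
    Complex.ofReal_re, div_eq_inv_mul]

lemma re_projOnto_apply_self_nonneg (v : P → ℂ) (p : P) : 0 ≤ (projOnto v p p).re := by
  rw [re_projOnto_apply_self]
  exact div_nonneg (Complex.normSq_nonneg _) (sum_nonneg fun r _ => Complex.normSq_nonneg _)

lemma norm_projOnto_apply (v : P → ℂ) (p q : P) :
    ‖projOnto v p q‖ = ‖v p‖ * ‖v q‖ / ∑ r, Complex.normSq (v r) := by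
  have hS : 0 ≤ ∑ r, Complex.normSq (v r) := sum_nonneg fun r _ => Complex.normSq_nonneg _
  rw [projOnto_apply, norm_mul, norm_mul, norm_inv, Complex.norm_real, Real.norm_of_nonneg hS,
    RCLike.norm_conj, div_eq_inv_mul]

end Projection

section LocalInteraction

variable {n : ℕ}

/-- With `λ_0 = 1`, `φ_i = skewVec (weight lam) 0 i` and `φ_{ij} = skewVec (weight lam) i j`,
which makes the local interaction a sum over unordered pairs of states
(`hloc_eq_sum_projOnto_bondVec`). -/
def weight (lam : Fin n → ℝ) : Fin (n + 1) → ℝ := Fin.cons 1 lam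

def skewVec (μ : Fin (n + 1) → ℝ) (a b : Fin (n + 1)) : Fin (n + 1) × Fin (n + 1) → ℂ :=
  fun p => (μ a : ℂ) * ketPair a b p - (μ b : ℂ) * ketPair b a p

lemma skewVec_apply_eq_zero (μ : Fin (n + 1) → ℝ) {a b : Fin (n + 1)}
    {p : Fin (n + 1) × Fin (n + 1)} (h₁ : p ≠ (a, b)) (h₂ : p ≠ (b, a)) :
    skewVec μ a b p = 0 := by
  simp [skewVec, ketPair, h₁, h₂]

lemma skewVec_apply_left (μ : Fin (n + 1) → ℝ) {a b : Fin (n + 1)} (hab : a ≠ b) :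
    skewVec μ a b (a, b) = μ a := by
  simp [skewVec, ketPair, hab]

lemma skewVec_apply_right (μ : Fin (n + 1) → ℝ) {a b : Fin (n + 1)} (hab : a ≠ b) :
    skewVec μ a b (b, a) = -μ b := by
  simp [skewVec, ketPair, hab, Ne.symm hab]

lemma sum_normSq_skewVec (μ : Fin (n + 1) → ℝ) {a b : Fin (n + 1)} (hab : a ≠ b) :
    ∑ p, Complex.normSq (skewVec μ a b p) = μ a ^ 2 + μ b ^ 2 := by
  rw [Fintype.sum_eq_add (a, b) (b, a) (by simp [hab]) fun p hp => by
      rw [skewVec_apply_eq_zero μ hp.1 hp.2, map_zero],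
    skewVec_apply_left μ hab, skewVec_apply_right μ hab]
  simp [Complex.normSq_ofReal, sq]

def bondVec (μ : Fin (n + 1) → ℝ) (u : Fin (n + 1) × Fin (n + 1)) :
    Fin (n + 1) × Fin (n + 1) → ℂ :=
  if u.1 < u.2 then skewVec μ u.1 u.2 else if u.1 = u.2 ∧ u.1 ≠ 0 then ketPair u.1 u.1 else 0

lemma bondVec_apply_eq_zero (μ : Fin (n + 1) → ℝ) {u p : Fin (n + 1) × Fin (n + 1)}
    (h₁ : p ≠ u) (h₂ : p ≠ u.swap) : bondVec μ u p = 0 := by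
  unfold bondVec
  split_ifs
  · exact skewVec_apply_eq_zero μ h₁ h₂
  · simp_all [ketPair, Prod.ext_iff]
  · rfl

lemma bondVec_eq_zero_of_lt (μ : Fin (n + 1) → ℝ) {u : Fin (n + 1) × Fin (n + 1)}
    (h : u.2 < u.1) : bondVec μ u = 0 := by
  simp [bondVec, not_lt_of_gt h, h.ne']

lemma hloc_eq_sum_projOnto_bondVec (lam : Fin n → ℝ) :
    hloc lam = ∑ u, projOnto (bondVec (weight lam) u) := by
  have hA : ∀ j, skewVec (weight lam) 0 j.succ = phiA (lam j) j := fun j => by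
    funext p
    simp [skewVec, phiA, weight]
  have hB : ∀ i j, skewVec (weight lam) i.succ j.succ = phiB (lam i) (lam j) i j := fun i j => by
    funext p
    simp [skewVec, phiB, weight]
  simp only [Fintype.sum_prod_type, Fin.sum_univ_succ (n := n), bondVec, hloc]
  simp only [Fin.succ_pos, Fin.not_lt_zero, lt_irrefl, Fin.succ_lt_succ_iff, Fin.succ_inj,
    ne_eq, Fin.succ_ne_zero, not_true, and_false, false_and, if_true, if_false, projOnto_zero,
    zero_add, hA, hB]
  refine congrArg _ (sum_congr rfl fun i _ => sum_congr rfl fun j _ => ?_)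
  split_ifs <;> simp_all [projOnto_zero, phiC]

def sortPair {α : Type*} [LinearOrder α] (p : α × α) : α × α := if p.1 ≤ p.2 then p else p.swap

lemma hloc_apply (lam : Fin n → ℝ) (p q : Fin (n + 1) × Fin (n + 1)) :
    hloc lam p q = projOnto (bondVec (weight lam) (sortPair p)) p q := by
  rw [hloc_eq_sum_projOnto_bondVec, Matrix.sum_apply]
  refine Fintype.sum_eq_single _ fun u hu => ?_
  by_cases hp : p = u ∨ p = u.swap
  · suffices u.2 < u.1 by rw [bondVec_eq_zero_of_lt _ this, projOnto_zero]; rfl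
    rcases hp with rfl | rfl <;> simp only [sortPair, Prod.fst_swap, Prod.snd_swap] at hu <;>
      split_ifs at hu with h
    · exact absurd rfl hu
    · exact not_le.mp h
    · exact lt_of_le_of_ne h fun h' => hu (Prod.ext h'.symm h')
    · simp at hu
  · obtain ⟨h₁, h₂⟩ := not_or.mp hp
    exact projOnto_apply_eq_zero_of_left (bondVec_apply_eq_zero _ h₁ h₂) q

lemma hloc_apply_of_lt (lam : Fin n → ℝ) {a b : Fin (n + 1)} (h : a < b)
    (q : Fin (n + 1) × Fin (n + 1)) :
    hloc lam (a, b) q = projOnto (skewVec (weight lam) a b) (a, b) q := by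
  simp [hloc_apply, sortPair, h.le, bondVec, h]

lemma hloc_apply_of_gt (lam : Fin n → ℝ) {a b : Fin (n + 1)} (h : b < a)
    (q : Fin (n + 1) × Fin (n + 1)) :
    hloc lam (a, b) q = projOnto (skewVec (weight lam) b a) (a, b) q := by
  simp [hloc_apply, sortPair, not_le.mpr h, bondVec, h]

lemma hloc_apply_self_of_ne_zero (lam : Fin n → ℝ) {a : Fin (n + 1)} (ha : a ≠ 0)
    (q : Fin (n + 1) × Fin (n + 1)) :
    hloc lam (a, a) q = projOnto (ketPair a a) (a, a) q := by
  simp [hloc_apply, sortPair, bondVec, ha]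

lemma hloc_zero_zero (lam : Fin n → ℝ) (q : Fin (n + 1) × Fin (n + 1)) :
    hloc lam (0, 0) q = 0 := by
  simp [hloc_apply, sortPair, bondVec, projOnto_zero]

lemma hloc_apply_eq_zero (lam : Fin n → ℝ) {p q : Fin (n + 1) × Fin (n + 1)} (h₁ : q ≠ p)
    (h₂ : q ≠ p.swap) : hloc lam p q = 0 := by
  rw [hloc_apply]
  refine projOnto_apply_eq_zero_of_right (bondVec_apply_eq_zero _ ?_ ?_) p <;>
    unfold sortPair <;> split_ifs <;> simpa

lemma re_hloc_apply_self_nonneg (lam : Fin n → ℝ) (p : Fin (n + 1) × Fin (n + 1)) :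
    0 ≤ (hloc lam p p).re := by
  rw [hloc_apply]
  exact re_projOnto_apply_self_nonneg _ _

lemma hloc_isHermitian (lam : Fin n → ℝ) : (hloc lam).IsHermitian := by
  rw [hloc_eq_sum_projOnto_bondVec]
  exact isSelfAdjoint_sum _ fun u _ => projOnto_isHermitian _

variable {ε : ℝ} {lam : Fin n → ℝ} (hpos : ∀ a, 0 < weight lam a)
  (hdecay : ∀ a b, a < b → weight lam b ≤ ε * weight lam a)
include hpos hdecay

lemma nonneg_of_weight_decay {a : Fin (n + 1)} (ha : a ≠ 0) : 0 ≤ ε := by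
  have h := hdecay 0 a (Fin.pos_iff_ne_zero.mpr ha)
  rw [weight, Fin.cons_zero, mul_one] at h
  exact (hpos a).le.trans h

lemma one_sub_sq_le_re_hloc_apply_self {a b : Fin (n + 1)} (hab : a ≤ b) (hb : b ≠ 0) :
    1 - ε ^ 2 ≤ (hloc lam (a, b) (a, b)).re := by
  rcases hab.lt_or_eq with h | rfl
  · rw [hloc_apply_of_lt lam h, re_projOnto_apply_self, sum_normSq_skewVec _ h.ne,
      skewVec_apply_left _ h.ne, Complex.normSq_ofReal, ← sq]
    exact one_sub_sq_le_sq_div_sq_add_sq (hpos a) (hpos b).le (hdecay a b h)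
  · have h₁ : (hloc lam (a, a) (a, a)).re = 1 := by
      simp [hloc_apply_self_of_ne_zero lam hb, re_projOnto_apply_self, ketPair]
    linarith [sq_nonneg ε]

lemma norm_hloc_apply_swap_le {a b : Fin (n + 1)} (hab : a ≠ b) :
    ‖hloc lam (a, b) (b, a)‖ ≤ ε := by
  rcases hab.lt_or_gt with h | h
  · rw [hloc_apply_of_lt lam h, norm_projOnto_apply, sum_normSq_skewVec _ h.ne,
      skewVec_apply_left _ h.ne, skewVec_apply_right _ h.ne, norm_neg, Complex.norm_real,
      Complex.norm_real, Real.norm_of_nonneg (hpos a).le, Real.norm_of_nonneg (hpos b).le]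
    exact mul_div_sq_add_sq_le (hpos a) (hpos b).le (hdecay a b h)
  · rw [hloc_apply_of_gt lam h, norm_projOnto_apply, sum_normSq_skewVec _ h.ne,
      skewVec_apply_left _ h.ne, skewVec_apply_right _ h.ne, norm_neg, Complex.norm_real,
      Complex.norm_real, Real.norm_of_nonneg (hpos a).le, Real.norm_of_nonneg (hpos b).le,
      mul_comm]
    exact mul_div_sq_add_sq_le (hpos b) (hpos a).le (hdecay b a h)

lemma sum_erase_norm_hloc_le (p : Fin (n + 1) × Fin (n + 1)) :
    ∑ q ∈ univ.erase p, ‖hloc lam p q‖ ≤ if p.1 = p.2 then 0 else ε := by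
  split_ifs with hp
  · refine (sum_eq_zero fun q hq => ?_).le
    rw [hloc_apply_eq_zero lam (ne_of_mem_erase hq) fun h => ne_of_mem_erase hq
      (h.trans (Prod.ext hp.symm hp)), norm_zero]
  · have hswap : p.swap ∈ univ.erase p :=
      mem_erase.mpr ⟨fun h => hp (congrArg Prod.snd h), mem_univ _⟩
    rw [sum_eq_single_of_mem _ hswap fun q hq hq' => by
      rw [hloc_apply_eq_zero lam (ne_of_mem_erase hq) hq', norm_zero]]
    exact norm_hloc_apply_swap_le hpos hdecay hp

end LocalInteraction

section Embedding

variable {n : ℕ} {V : Type*} [Fintype V] [DecidableEq V]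

lemma embed_isHermitian (x y : V)
    {h : Matrix (Fin (n + 1) × Fin (n + 1)) (Fin (n + 1) × Fin (n + 1)) ℂ}
    (hh : h.IsHermitian) : (embed x y h).IsHermitian := by
  ext σ τ
  have hsymm : (∀ z, z ≠ x → z ≠ y → τ z = σ z) ↔ ∀ z, z ≠ x → z ≠ y → σ z = τ z :=
    forall₃_congr fun _ _ _ => eq_comm
  simp only [Matrix.conjTranspose_apply, embed, Matrix.of_apply, hsymm]
  split_ifs
  · exact hh.apply _ _
  · exact star_zero _

lemma embed_apply_self (x y : V)
    (h : Matrix (Fin (n + 1) × Fin (n + 1)) (Fin (n + 1) × Fin (n + 1)) ℂ)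
    (σ : V → Fin (n + 1)) : embed x y h σ σ = h (σ x, σ y) (σ x, σ y) := by
  simp [embed]

lemma sum_erase_norm_embed_le (x y : V)
    (h : Matrix (Fin (n + 1) × Fin (n + 1)) (Fin (n + 1) × Fin (n + 1)) ℂ)
    (σ : V → Fin (n + 1)) :
    ∑ τ ∈ univ.erase σ, ‖embed x y h σ τ‖ ≤ ∑ q ∈ univ.erase (σ x, σ y), ‖h (σ x, σ y) q‖ := by
  let Agrees (τ : V → Fin (n + 1)) : Prop := ∀ z, z ≠ x → z ≠ y → σ z = τ z
  have hext : ∀ τ₁ τ₂, Agrees τ₁ → Agrees τ₂ → (τ₁ x, τ₁ y) = (τ₂ x, τ₂ y) → τ₁ = τ₂ := by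
    intro τ₁ τ₂ h₁ h₂ h
    simp only [Prod.mk.injEq] at h
    funext z
    by_cases hx : z = x
    · exact hx ▸ h.1
    by_cases hy : z = y
    · exact hy ▸ h.2
    rw [← h₁ z hx hy, h₂ z hx hy]
  set S := (univ.erase σ).filter Agrees
  calc ∑ τ ∈ univ.erase σ, ‖embed x y h σ τ‖ = ∑ τ ∈ S, ‖h (σ x, σ y) (τ x, τ y)‖ := by
        rw [sum_filter]
        refine sum_congr rfl fun τ _ => ?_
        simp only [embed, Matrix.of_apply]
        split_ifs <;> simp
    _ = ∑ q ∈ S.image fun τ => (τ x, τ y), ‖h (σ x, σ y) q‖ := by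
        rw [sum_image fun τ₁ h₁ τ₂ h₂ => hext τ₁ τ₂ (mem_filter.mp h₁).2 (mem_filter.mp h₂).2]
    _ ≤ ∑ q ∈ univ.erase (σ x, σ y), ‖h (σ x, σ y) q‖ := by
        refine sum_le_sum_of_subset_of_nonneg ?_ fun _ _ _ => norm_nonneg _
        simp only [subset_iff, mem_image, mem_erase, mem_univ, and_true]
        rintro _ ⟨τ, hτ, rfl⟩ hτσ
        obtain ⟨hτσ', hτ⟩ := mem_filter.mp hτ
        exact (mem_erase.mp hτσ').1 (hext τ σ hτ (fun _ _ _ => rfl) hτσ)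

end Embedding

section Torus

variable {n d N : ℕ} [NeZero N]

lemma sum_comp_nbrT {M : Type*} [AddCommMonoid M] (f : (Fin d → ZMod N) → M) (k : Fin d) :
    ∑ x, f (nbrT x k) = ∑ x, f x := by
  have h : ∀ x : Fin d → ZMod N, nbrT x k = x + Pi.single k 1 := fun x => by
    funext j
    by_cases hj : j = k <;> simp [nbrT, hj]
  simp only [h]
  exact Equiv.sum_comp (Equiv.addRight _) f

lemma card_occupied_le (σ : (Fin d → ZMod N) → Fin (n + 1)) (k : Fin d) :
    #{x | σ x ≠ 0} ≤ (n + 1) * #{x | σ x ≤ σ (nbrT x k) ∧ σ (nbrT x k) ≠ 0} := by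
  have hstep : ∀ a b : Fin (n + 1), ((b : ℕ) : ℤ) - (a : ℕ) + (if a ≠ 0 then 1 else 0)
      ≤ (n + 1) * (if a ≤ b ∧ b ≠ 0 then 1 else 0) := fun a b => by
    have := a.isLt
    have := b.isLt
    split_ifs <;> simp_all only [ne_eq, Fin.ext_iff, Fin.le_iff_val_le_val, Fin.val_zero,
      not_and] <;> omega
  have htele : ∑ x, (((σ (nbrT x k) : ℕ) : ℤ) - (σ x : ℕ)) = 0 := by
    rw [sum_sub_distrib, sum_comp_nbrT (fun x => ((σ x : ℕ) : ℤ)), sub_self]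
  have hsum := sum_le_sum fun x (_ : x ∈ univ) => hstep (σ x) (σ (nbrT x k))
  rw [sum_add_distrib, htele, zero_add, ← mul_sum, sum_boole, sum_boole] at hsum
  exact_mod_cast hsum

lemma HL_isHermitian (lam : Fin n → Fin d → ℝ) : (HL n d N lam).IsHermitian :=
  isSelfAdjoint_sum _ fun _ _ => embed_isHermitian _ _ (hloc_isHermitian _)

lemma hedge_apply_self (lam : Fin n → Fin d → ℝ) (e : (Fin d → ZMod N) × Fin d)
    (σ : (Fin d → ZMod N) → Fin (n + 1)) :
    hedge lam e σ σ
      = hloc (fun i => lam i e.2) (σ e.1, σ (nbrT e.1 e.2)) (σ e.1, σ (nbrT e.1 e.2)) :=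
  embed_apply_self _ _ _ σ

lemma re_hedge_apply_self_nonneg (lam : Fin n → Fin d → ℝ) (e : (Fin d → ZMod N) × Fin d)
    (σ : (Fin d → ZMod N) → Fin (n + 1)) : 0 ≤ (hedge lam e σ σ).re := by
  rw [hedge_apply_self]
  exact re_hloc_apply_self_nonneg _ _

lemma re_HL_apply_self (lam : Fin n → Fin d → ℝ) (σ : (Fin d → ZMod N) → Fin (n + 1)) :
    (HL n d N lam σ σ).re = ∑ e, (hedge lam e σ σ).re := by
  rw [HL, Matrix.sum_apply, Complex.re_sum]

lemma re_HL_apply_self_nonneg (lam : Fin n → Fin d → ℝ) (σ : (Fin d → ZMod N) → Fin (n + 1)) :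
    0 ≤ (HL n d N lam σ σ).re := by
  rw [re_HL_apply_self]
  exact sum_nonneg fun e _ => re_hedge_apply_self_nonneg lam e σ

lemma HL_apply_self_eq_zero {lam : Fin n → Fin d → ℝ} {σ : (Fin d → ZMod N) → Fin (n + 1)}
    (hσ : ∀ x, σ x = 0) : HL n d N lam σ σ = 0 := by
  rw [HL, Matrix.sum_apply]
  exact sum_eq_zero fun e _ => by rw [hedge_apply_self, hσ, hσ, hloc_zero_zero]

variable {ε : ℝ} {lam : Fin n → Fin d → ℝ} (hpos : ∀ k a, 0 < weight (fun i => lam i k) a)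
  (hdecay : ∀ k a b, a < b → weight (fun i => lam i k) b ≤ ε * weight (fun i => lam i k) a)
include hpos hdecay

lemma one_sub_sq_mul_card_le_re_HL_apply_self (σ : (Fin d → ZMod N) → Fin (n + 1)) (k : Fin d) :
    (1 - ε ^ 2) * #{x | σ x ≤ σ (nbrT x k) ∧ σ (nbrT x k) ≠ 0} ≤ (HL n d N lam σ σ).re := by
  calc (1 - ε ^ 2) * #{x | σ x ≤ σ (nbrT x k) ∧ σ (nbrT x k) ≠ 0}
      = ∑ x ∈ {x | σ x ≤ σ (nbrT x k) ∧ σ (nbrT x k) ≠ 0}, (1 - ε ^ 2) := by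
        rw [sum_const, nsmul_eq_mul, mul_comm]
    _ ≤ ∑ x ∈ {x | σ x ≤ σ (nbrT x k) ∧ σ (nbrT x k) ≠ 0}, (hedge lam (x, k) σ σ).re :=
        sum_le_sum fun x hx => by
          rw [hedge_apply_self]
          exact one_sub_sq_le_re_hloc_apply_self (hpos k) (hdecay k) (mem_filter.mp hx).2.1
            (mem_filter.mp hx).2.2
    _ ≤ ∑ x, (hedge lam (x, k) σ σ).re :=
        sum_le_sum_of_subset_of_nonneg (subset_univ _) fun x _ _ =>
          re_hedge_apply_self_nonneg lam _ σ
    _ ≤ ∑ x, ∑ k', (hedge lam (x, k') σ σ).re :=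
        sum_le_sum fun x _ => single_le_sum (f := fun k' => (hedge lam (x, k') σ σ).re)
          (fun k' _ => re_hedge_apply_self_nonneg lam _ σ) (mem_univ k)
    _ = (HL n d N lam σ σ).re := by
        rw [re_HL_apply_self, Fintype.sum_prod_type]

lemma sum_erase_norm_HL_le (σ : (Fin d → ZMod N) → Fin (n + 1)) :
    ∑ τ ∈ univ.erase σ, ‖HL n d N lam σ τ‖ ≤ 2 * d * ε * #{x | σ x ≠ 0} := by
  let occ : (Fin d → ZMod N) → ℝ := fun x => if σ x ≠ 0 then 1 else 0
  have hedge_le : ∀ e : (Fin d → ZMod N) × Fin d,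
      ∑ τ ∈ univ.erase σ, ‖hedge lam e σ τ‖ ≤ ε * (occ e.1 + occ (nbrT e.1 e.2)) := by
    intro e
    refine (sum_erase_norm_embed_le _ _ _ σ).trans
      ((sum_erase_norm_hloc_le (hpos e.2) (hdecay e.2) _).trans ?_)
    by_cases hvac : σ e.1 = 0 ∧ σ (nbrT e.1 e.2) = 0
    · simp [occ, hvac]
    have hε : 0 ≤ ε := by
      by_cases h : σ e.1 = 0
      · exact nonneg_of_weight_decay (hpos e.2) (hdecay e.2) fun h' => hvac ⟨h, h'⟩
      · exact nonneg_of_weight_decay (hpos e.2) (hdecay e.2) h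
    have hocc : 1 ≤ occ e.1 + occ (nbrT e.1 e.2) := by
      by_cases h : σ e.1 = 0 <;> simp_all [occ, apply_ite]
    split_ifs <;> nlinarith
  calc ∑ τ ∈ univ.erase σ, ‖HL n d N lam σ τ‖
      ≤ ∑ e, ∑ τ ∈ univ.erase σ, ‖hedge lam e σ τ‖ := by
        rw [sum_comm]
        exact sum_le_sum fun τ _ => by rw [HL, Matrix.sum_apply]; exact norm_sum_le _ _
    _ ≤ ∑ e : (Fin d → ZMod N) × Fin d, ε * (occ e.1 + occ (nbrT e.1 e.2)) :=
        sum_le_sum fun e _ => hedge_le e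
    _ = 2 * d * ε * #{x | σ x ≠ 0} := by
        rw [← mul_sum, Fintype.sum_prod_type_right]
        simp only [sum_add_distrib, sum_comp_nbrT (fun x => occ x), sum_const, card_univ,
          Fintype.card_fin, occ, sum_boole, nsmul_eq_mul]
        ring

end Torus

section Spectrum

variable {I : Type*} [Fintype I] [DecidableEq I]

lemma exists_norm_sub_diag_le_of_mem_spectrum {A : Matrix I I ℂ} {μ : ℂ}
    (h : μ ∈ spectrum ℂ A) : ∃ i, ‖μ - A i i‖ ≤ ∑ j ∈ univ.erase i, ‖A i j‖ := by
  rw [← Matrix.spectrum_toLin', ← Module.End.hasEigenvalue_iff_mem_spectrum] at h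
  obtain ⟨i, hi⟩ := eigenvalue_mem_ball h
  exact ⟨i, by rwa [Metric.mem_closedBall, dist_eq_norm] at hi⟩

lemma exists_pos_mem_spectrum_of_trace_pos {A : Matrix I I ℂ} (hA : A.IsHermitian)
    (htr : 0 < A.trace.re) : ∃ γ : ℝ, 0 < γ ∧ (γ : ℂ) ∈ spectrum ℂ A := by
  rw [hA.trace_eq_sum_eigenvalues, Complex.re_sum] at htr
  obtain ⟨i, -, hi⟩ := exists_lt_of_sum_lt (s := univ) (f := fun _ => (0 : ℝ))
    (g := hA.eigenvalues) (by simpa using htr)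
  exact ⟨_, hi, spectrum.algebraMap_mem ℂ (hA.eigenvalues_mem_spectrum_real i)⟩

end Spectrum

section GapBound

variable {n d N : ℕ} [NeZero N] {ε : ℝ} {lam : Fin n → Fin d → ℝ}
  (hpos : ∀ k a, 0 < weight (fun i => lam i k) a)
  (hdecay : ∀ k a b, a < b → weight (fun i => lam i k) b ≤ ε * weight (fun i => lam i k) a)
include hpos hdecay

lemma le_of_mem_spectrum_HL (k : Fin d) {γ : ℝ} (hγ0 : 0 < γ)
    (hγ : (γ : ℂ) ∈ spectrum ℂ (HL n d N lam)) : (1 - ε ^ 2) / (n + 1) - 2 * d * ε ≤ γ := by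
  obtain ⟨σ, hσ⟩ := exists_norm_sub_diag_le_of_mem_spectrum hγ
  have hrow := sum_erase_norm_HL_le hpos hdecay σ
  by_cases hvac : ∀ x, σ x = 0
  · have : ‖(γ : ℂ)‖ ≤ 0 := by simpa [HL_apply_self_eq_zero hvac, hvac] using hσ.trans hrow
    exact absurd (norm_le_zero_iff.mp this) (Complex.ofReal_ne_zero.mpr hγ0.ne')
  obtain ⟨x₀, hx₀⟩ := not_forall.mp hvac
  have hre := (neg_le_abs ((γ : ℂ) - HL n d N lam σ σ).re).trans (Complex.abs_re_le_norm _)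
  rw [Complex.sub_re, Complex.ofReal_re] at hre
  refine one_sub_sq_div_sub_le hγ0 (nonneg_of_weight_decay (hpos k) (hdecay k) hx₀)
    (by positivity) (by positivity) (P := #{x | σ x ≠ 0})
    (G := #{x | σ x ≤ σ (nbrT x k) ∧ σ (nbrT x k) ≠ 0}) ?_
    (by exact_mod_cast card_occupied_le σ k) ?_
  · exact_mod_cast card_pos.mpr ⟨x₀, mem_filter.mpr ⟨mem_univ _, hx₀⟩⟩
  · linarith [one_sub_sq_mul_card_le_re_HL_apply_self hpos hdecay σ k]

lemma exists_pos_mem_spectrum_HL (hε : ε < 1) {a : Fin (n + 1)} (ha : a ≠ 0) (k : Fin d) :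
    ∃ γ : ℝ, 0 < γ ∧ (γ : ℂ) ∈ spectrum ℂ (HL n d N lam) := by
  refine exists_pos_mem_spectrum_of_trace_pos (HL_isHermitian lam) ?_
  let σ : (Fin d → ZMod N) → Fin (n + 1) := fun _ => a
  have hε₀ : 0 ≤ ε := nonneg_of_weight_decay (hpos k) (hdecay k) ha
  have hσ : 0 < (HL n d N lam σ σ).re := by
    refine lt_of_lt_of_le ?_ (one_sub_sq_mul_card_le_re_HL_apply_self hpos hdecay σ k)
    have : 0 < #{x | σ x ≤ σ (nbrT x k) ∧ σ (nbrT x k) ≠ 0} :=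
      card_pos.mpr ⟨0, by simp [σ, ha]⟩
    have : 0 < 1 - ε ^ 2 := by nlinarith
    positivity
  rw [Matrix.trace, Complex.re_sum]
  exact hσ.trans_le (single_le_sum (f := fun σ => (HL n d N lam σ σ).re)
    (fun σ _ => re_HL_apply_self_nonneg lam σ) (mem_univ σ))

end GapBound

section Anisotropy

variable {n : ℕ} {δ : ℝ} {lam : Fin n → ℝ}
  (hlam : ∀ i : Fin n, 1 / 2 * δ ^ ((i : ℕ) + 1) ≤ lam i ∧ lam i ≤ 2 * δ ^ ((i : ℕ) + 1))
include hlam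

lemma weight_pos (hδ : 0 < δ) (a : Fin (n + 1)) : 0 < weight lam a := by
  refine Fin.cases ?_ (fun i => ?_) a
  · simp [weight]
  · simp only [weight, Fin.cons_succ]
    exact lt_of_lt_of_le (by positivity) (hlam i).1

lemma weight_le_mul_weight (hδ : 0 < δ) (hδ₁ : δ ≤ 1) (a b : Fin (n + 1)) (hab : a < b) :
    weight lam b ≤ 4 * δ * weight lam a := by
  obtain ⟨j, rfl⟩ := Fin.exists_succ_eq.mpr (Fin.pos_iff_ne_zero.mp (a.zero_le.trans_lt hab))
  have hj : lam j ≤ 2 * δ ^ ((j : ℕ) + 1) := (hlam j).2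
  refine Fin.cases (fun _ => ?_) (fun i hij => ?_) a hab
  · simp only [weight, Fin.cons_succ, Fin.cons_zero, mul_one]
    nlinarith [pow_le_pow_of_le_one hδ.le hδ₁ (Nat.le_add_left 1 j), pow_one δ]
  · simp only [weight, Fin.cons_succ]
    have hi : (i : ℕ) + 2 ≤ (j : ℕ) + 1 := by
      have := Fin.succ_lt_succ_iff.mp hij
      omega
    nlinarith [(hlam i).1, pow_succ δ ((i : ℕ) + 1), pow_le_pow_of_le_one hδ.le hδ₁ hi]

end Anisotropy

lemma mul_add_one_le_of_lt_threshold {n : ℕ} (hn : 1 ≤ n) {δ : ℝ}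
    (hδ : δ < (1 - 3 / (16 * (n : ℝ))) / (96 * (n : ℝ) ^ 2 * (16 * (n : ℝ) + 1) ^ 2)) :
    δ * (n + 1) ≤ 1 / 64 := by
  have hn' : (1 : ℝ) ≤ n := by exact_mod_cast hn
  have hD : (0 : ℝ) < 96 * (n : ℝ) ^ 2 * (16 * (n : ℝ) + 1) ^ 2 := by positivity
  have h₁ : δ * (96 * (n : ℝ) ^ 2 * (16 * (n : ℝ) + 1) ^ 2) < 1 := by
    rw [lt_div_iff₀ hD] at hδ
    have : (0 : ℝ) ≤ 3 / (16 * n) := by positivity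
    linarith
  have h₂ : 64 * ((n : ℝ) + 1) ≤ 96 * (n : ℝ) ^ 2 * (16 * (n : ℝ) + 1) ^ 2 := by
    nlinarith [mul_le_mul hn' hn' zero_le_one (by positivity : (0 : ℝ) ≤ n)]
  nlinarith

/-- Fix the PVBS model in dimension `d = 2` with `n ≥ 1` species. If
`0 < δ < (1 − 3/(16n))/(96 n² (16n+1)²)` and the anisotropy parameters satisfy
`(1/2)δ^i ≤ λ_i^{(k)} ≤ 2δ^i` for all `1 ≤ i ≤ n`, `k ∈ {1,2}`, then `H_L` is gapped:
`inf_{L ≥ 2} γ_L > 0`. -/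
theorem pvbs_spectral_gap_two_dim (n : ℕ) (hn : 1 ≤ n) (δ : ℝ) (hδ0 : 0 < δ)
    (hδ : δ < (1 - 3 / (16 * (n : ℝ))) / (96 * (n : ℝ) ^ 2 * (16 * (n : ℝ) + 1) ^ 2))
    (lam : Fin n → Fin 2 → ℝ)
    (hlam : ∀ (i : Fin n) (k : Fin 2),
      1 / 2 * δ ^ ((i : ℕ) + 1) ≤ lam i k ∧ lam i k ≤ 2 * δ ^ ((i : ℕ) + 1)) :
    ∃ g : ℝ, 0 < g ∧
      ∀ (L : ℕ) [NeZero (2 * L)], 2 ≤ L → g ≤ gap (HL n 2 (2 * L) lam) := by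
  have hsmall := mul_add_one_le_of_lt_threshold hn hδ
  have hε : 4 * δ < 1 := by nlinarith [n.cast_nonneg (α := ℝ)]
  have hpos k := weight_pos (fun i => hlam i k) hδ0
  have hdecay k := weight_le_mul_weight (fun i => hlam i k) hδ0 (by linarith)
  have hlast : Fin.last n ≠ 0 := fun h => by simp [Fin.ext_iff] at h; omega
  refine ⟨1 / (2 * (n + 1)), by positivity, fun L _ _ => ?_⟩
  calc 1 / (2 * ((n : ℝ) + 1)) ≤ (1 - (4 * δ) ^ 2) / (n + 1) - 2 * (2 : ℕ) * (4 * δ) := by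
        rw [div_sub' (by positivity), div_le_div_iff₀ (by positivity) (by positivity)]
        push_cast
        nlinarith
    _ ≤ gap (HL n 2 (2 * L) lam) :=
        le_csInf (exists_pos_mem_spectrum_HL hpos hdecay hε hlast 0)
          fun γ hγ => le_of_mem_spectrum_HL hpos hdecay 0 hγ.1 hγ.2

end PVBS
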